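/- arXiv:1605.07878 — 7 statements merged into one kernel-verified Lean document; each statement's English description precedes it below -/
import Mathlib

section
/- Let n be a natural number and let G be a symmetric matrix in Matrix (Fin n) (Fin n) ℤ which is positive definite (vᵀ * G * v > 0 for every nonzero v : Fin n → ℤ) and unimodular (IsUnit G.det). Then the following are equivalent: (1) there exists P ∈ Matrix (Fin n) (Fin n) ℤ with IsUnit P.det and Pᵀ * P = G; (2) there exists A ∈ Matrix (Fin n) (Fin n) ℤ with Aᵀ * A = G; (3) there exist m : ℕ and A ∈ Matrix (Fin m) (Fin n) ℤ with Aᵀ * A = G. -/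
open Matrix Finset

/-- Key lemma: if `G = AᵀA` for some `m × n` integer matrix `A` and `G.det` is a unit,
then `G = BᵀB` for a square `n × n` integer matrix `B`. -/
lemma key_square {m n : ℕ} (G : Matrix (Fin n) (Fin n) ℤ) (hdet : IsUnit G.det)
    (A : Matrix (Fin m) (Fin n) ℤ) (hA : Aᵀ * A = G) :
    ∃ B : Matrix (Fin n) (Fin n) ℤ, Bᵀ * B = G := by
  have hsymm : Gᵀ = G := by rw [← hA, transpose_mul, transpose_transpose]
  have hGi : G * G⁻¹ = 1 := Matrix.mul_nonsing_inv G hdet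
  have hGi' : G⁻¹ * G = 1 := Matrix.nonsing_inv_mul G hdet
  have hGit : (G⁻¹)ᵀ = G⁻¹ := by rw [Matrix.transpose_nonsing_inv, hsymm]
  set P := A * G⁻¹ * Aᵀ with hPdef
  have hPt : Pᵀ = P := by
    rw [hPdef, transpose_mul, transpose_mul, transpose_transpose, hGit,
      Matrix.mul_assoc]
  have hPA : P * A = A := by
    rw [hPdef, Matrix.mul_assoc, Matrix.mul_assoc, hA, hGi', Matrix.mul_one]
  have hP2 : P * P = P := by
    nth_rewrite 2 [hPdef]
    rw [← Matrix.mul_assoc, ← Matrix.mul_assoc, hPA]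
  have hsP : ∀ j k, P j k = P k j := by
    intro j k
    have := congrFun (congrFun hPt j) k
    simpa [Matrix.transpose_apply] using this.symm
  have hdiag : ∀ j, ∑ k, P k j * P k j = P j j := by
    intro j
    have h1 : (P * P) j j = P j j := by rw [hP2]
    rw [Matrix.mul_apply] at h1
    rw [← h1]
    exact Finset.sum_congr rfl fun k _ => by rw [hsP j k]
  have hQ2 : (1 - P) * (1 - P) = 1 - P := by
    rw [sub_mul, one_mul, mul_sub, mul_one, hP2, sub_self, sub_zero]
  have hsQ : ∀ j k, (1 - P) j k = (1 - P) k j := by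
    intro j k
    simp only [Matrix.sub_apply, hsP j k, Matrix.one_apply]
    by_cases h : j = k <;> simp [h, eq_comm]
  have hdiagQ : ∀ j, ∑ k, (1 - P) k j * (1 - P) k j = (1 - P) j j := by
    intro j
    have h1 : ((1 - P) * (1 - P)) j j = (1 - P) j j := by rw [hQ2]
    rw [Matrix.mul_apply] at h1
    rw [← h1]
    exact Finset.sum_congr rfl fun k _ => by rw [hsQ j k]
  have hnnP : ∀ j, 0 ≤ P j j := by
    intro j
    rw [← hdiag j]
    exact Finset.sum_nonneg fun k _ => mul_self_nonneg _
  have hleP : ∀ j, P j j ≤ 1 := by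
    intro j
    have h0 : 0 ≤ (1 - P) j j := by
      rw [← hdiagQ j]
      exact Finset.sum_nonneg fun k _ => mul_self_nonneg _
    have h1 : (1 - P) j j = 1 - P j j := by
      simp [Matrix.sub_apply, Matrix.one_apply]
    linarith [h1 ▸ h0]
  -- if the diagonal entry is not 1, the whole column (hence row of A) vanishes
  have h01 : ∀ j, P j j = 1 ∨ ∀ k, P k j = 0 := by
    intro j
    rcases eq_or_ne (P j j) 1 with h | h
    · exact Or.inl h
    · right
      have hzero : P j j = 0 := by have := hnnP j; have := hleP j; omega
      intro k
      have hs : ∑ k, P k j * P k j = 0 := by rw [hdiag j, hzero]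
      have := (Finset.sum_eq_zero_iff_of_nonneg
        (fun k _ => mul_self_nonneg (P k j))).mp hs k (Finset.mem_univ k)
      exact mul_self_eq_zero.mp this
  set S : Finset (Fin m) := Finset.univ.filter (fun j => P j j = 1) with hSdef
  have hrow : ∀ j, j ∉ S → ∀ l, A j l = 0 := by
    intro j hj l
    have hj' : P j j ≠ 1 := by
      intro h
      exact hj (Finset.mem_filter.mpr ⟨Finset.mem_univ j, h⟩)
    have hcol : ∀ k, P k j = 0 := (h01 j).resolve_left hj'
    have : A j l = (P * A) j l := by rw [hPA]
    rw [this, Matrix.mul_apply]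
    apply Finset.sum_eq_zero
    intro k _
    rw [hsP j k, hcol k, zero_mul]
  -- trace computation: S has exactly n elements
  have htr : Matrix.trace P = (n : ℤ) := by
    rw [hPdef, Matrix.trace_mul_comm, ← Matrix.mul_assoc, hA, hGi, Matrix.trace_one]
    simp
  have hcard : S.card = n := by
    have h1 : (∑ j, P j j) = (S.card : ℤ) := by
      rw [← Finset.sum_filter_add_sum_filter_not Finset.univ (fun j => P j j = 1)]
      have h2 : ∑ j ∈ Finset.univ.filter (fun j => P j j = 1), P j j = (S.card : ℤ) := by
        rw [hSdef, Finset.card_eq_sum_ones]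
        push_cast
        exact Finset.sum_congr rfl fun j hj => (Finset.mem_filter.mp hj).2
      have h3 : ∑ j ∈ Finset.univ.filter (fun j => ¬ P j j = 1), P j j = 0 := by
        apply Finset.sum_eq_zero
        intro j hj
        exact ((h01 j).resolve_left (Finset.mem_filter.mp hj).2) j
      rw [h2, h3, add_zero]
    have h4 : Matrix.trace P = ∑ j, P j j := by
      simp [Matrix.trace, Matrix.diag]
    have : ((S.card : ℤ)) = (n : ℤ) := by rw [← h1, ← h4, htr]
    exact_mod_cast this
  -- enumerate S
  let e := S.orderIsoOfFin hcard
  refine ⟨A.submatrix (fun i => (e i : Fin m)) id, ?_⟩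
  rw [← hA]
  ext k l
  rw [Matrix.mul_apply, Matrix.mul_apply]
  simp only [Matrix.transpose_apply, Matrix.submatrix_apply, id]
  have hsub : ∑ j ∈ S, A j k * A j l = ∑ j, A j k * A j l := by
    apply Finset.sum_subset (Finset.subset_univ S)
    intro j _ hj
    rw [hrow j hj k, zero_mul]
  rw [← hsub, ← Finset.sum_coe_sort S (fun j => A j k * A j l)]
  exact Equiv.sum_comp e.toEquiv (fun x => A (x : Fin m) k * A (x : Fin m) l)

/-- Lemma 3.1: for a positive definite unimodular integral lattice, being standard,
embedding in the standard lattice of the same rank, and embedding in some standard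
lattice are all equivalent. -/
theorem stmt0 (n : ℕ) (G : Matrix (Fin n) (Fin n) ℤ)
    (hsymm : G.IsSymm)
    (hpos : ∀ v : Fin n → ℤ, v ≠ 0 → 0 < v ⬝ᵥ G.mulVec v)
    (hdet : IsUnit G.det) :
    ((∃ P : Matrix (Fin n) (Fin n) ℤ, IsUnit P.det ∧ Pᵀ * P = G) ↔
      (∃ A : Matrix (Fin n) (Fin n) ℤ, Aᵀ * A = G)) ∧
    ((∃ A : Matrix (Fin n) (Fin n) ℤ, Aᵀ * A = G) ↔
      (∃ (m : ℕ) (A : Matrix (Fin m) (Fin n) ℤ), Aᵀ * A = G)) := by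
  constructor
  · constructor
    · rintro ⟨P, _, hP⟩
      exact ⟨P, hP⟩
    · rintro ⟨A, hA⟩
      refine ⟨A, ?_, hA⟩
      have h : IsUnit (A.det * A.det) := by
        have hd : (Aᵀ * A).det = A.det * A.det := by
          rw [Matrix.det_mul, Matrix.det_transpose]
        rw [← hd, hA]
        exact hdet
      exact isUnit_of_mul_isUnit_left h
  · constructor
    · rintro ⟨A, hA⟩
      exact ⟨n, A, hA⟩
    · rintro ⟨m, A, hA⟩
      exact key_square G hdet A hA
end

section
/- Let m : ℕ and let G be a submodule of (Fin m → ℤ) such that the restriction to G of the standard dot-product bilinear form ⟨x, y⟩ = ∑ i, x i * y i is unimodular, i.e. the induced map G → Module.Dual ℤ G is bijective. Then G is a free ℤ-module of some finite rank n ≤ m admitting a basis whose Gram matrix with respect to the dot product is the n×n identity matrix, and the orthogonal complement G^⊥ = {x : Fin m → ℤ | ∀ g ∈ G, ⟨x, g⟩ = 0} admits a basis whose Gram matrix is the (m−n)×(m−n) identity matrix. -/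
/-- The standard dot-product bilinear form on `Fin m → ℤ`. -/
def dotB (m : ℕ) : (Fin m → ℤ) →ₗ[ℤ] (Fin m → ℤ) →ₗ[ℤ] ℤ :=
  LinearMap.mk₂ ℤ (fun x y => ∑ i, x i * y i)
    (by intro x x' y; simp [add_mul, Finset.sum_add_distrib])
    (by intro c x y; simp [Finset.mul_sum, mul_assoc])
    (by intro x y y'; simp [mul_add, Finset.sum_add_distrib])
    (by intro c x y; simp [Finset.mul_sum, mul_left_comm])

/-- The orthogonal complement of a submodule `G` of the standard lattice `Fin m → ℤ`
with respect to the dot product. -/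
def orthC {m : ℕ} (G : Submodule ℤ (Fin m → ℤ)) : Submodule ℤ (Fin m → ℤ) where
  carrier := {x | ∀ g ∈ G, ∑ i, x i * g i = 0}
  add_mem' := by
    intro a b ha hb g hg
    have h1 := ha g hg
    have h2 := hb g hg
    simp only [Pi.add_apply, add_mul, Finset.sum_add_distrib, h1, h2, add_zero]
  zero_mem' := by intro g hg; simp
  smul_mem' := by
    intro c x hx g hg
    have h1 := hx g hg
    simp only [Pi.smul_apply, smul_eq_mul, mul_assoc, ← Finset.mul_sum, h1, mul_zero]


/-!
Unimodularity lets every vector `x` be split as `x = a + w` with `a ∈ G` and `w ∈ G^⊥`: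
take for `a` the element of `G` representing the functional `⟨x, ·⟩` on `G`. For a standard
basis vector `eᵢ` this gives `1 = ⟨a, a⟩ + ⟨w, w⟩` with both terms non-negative integers, so
`eᵢ` lies in `G` or in `G^⊥`. If `S` is the set of `i` with `eᵢ ∈ G`, then every element of `G`
vanishes off `S` and every element of `G^⊥` vanishes on `S`, so `{eᵢ}_{i ∈ S}` and
`{eᵢ}_{i ∉ S}` are orthonormal bases of `G` and `G^⊥`.
-/

open Finset

lemma eq_zero_or_eq_zero_of_dotProduct_eq_zero_of_add_self_eq_one {ι : Type*} [Fintype ι]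
    {a w : ι → ℤ} (h : a ⬝ᵥ w = 0) (h1 : (a + w) ⬝ᵥ (a + w) = 1) : a = 0 ∨ w = 0 := by
  have hsplit : a ⬝ᵥ a + w ⬝ᵥ w = 1 := by
    rw [← h1, add_dotProduct, dotProduct_add, dotProduct_add, dotProduct_comm w a, h]
    ring
  have ha : 0 ≤ a ⬝ᵥ a := sum_nonneg fun i _ => mul_self_nonneg (a i)
  have hw : 0 ≤ w ⬝ᵥ w := sum_nonneg fun i _ => mul_self_nonneg (w i)
  rw [← dotProduct_self_eq_zero (v := a), ← dotProduct_self_eq_zero (v := w)]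
  omega

namespace StdLattice

variable {m : ℕ} {G H : Submodule ℤ (Fin m → ℤ)}

lemma mem_orthC_iff {x : Fin m → ℤ} : x ∈ orthC G ↔ ∀ g ∈ G, x ⬝ᵥ g = 0 := Iff.rfl

lemma exists_sub_mem_orthC
    (hG : Function.Surjective
      (fun g : G => ((dotB m (g : Fin m → ℤ)).domRestrict G : Module.Dual ℤ G)))
    (x : Fin m → ℤ) : ∃ a ∈ G, x - a ∈ orthC G := by
  obtain ⟨a, ha⟩ := hG ((dotB m x).domRestrict G)
  refine ⟨a, a.2, mem_orthC_iff.2 fun g hg => ?_⟩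
  have hag : a.1 ⬝ᵥ g = x ⬝ᵥ g := LinearMap.congr_fun ha ⟨g, hg⟩
  rw [sub_dotProduct, hag, sub_self]

lemma single_mem_or_single_mem_orthC
    (hG : Function.Surjective
      (fun g : G => ((dotB m (g : Fin m → ℤ)).domRestrict G : Module.Dual ℤ G)))
    (i : Fin m) : Pi.single i 1 ∈ G ∨ Pi.single i 1 ∈ orthC G := by
  obtain ⟨a, haG, hw⟩ := exists_sub_mem_orthC hG (Pi.single i 1)
  set w := Pi.single i 1 - a
  have hsum : a + w = Pi.single i 1 := add_sub_cancel a _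
  have haw : a ⬝ᵥ w = 0 := by rw [dotProduct_comm]; exact hw a haG
  have hnorm : (a + w) ⬝ᵥ (a + w) = 1 := by
    rw [hsum, dotProduct_single, Pi.single_eq_same, mul_one]
  rcases eq_zero_or_eq_zero_of_dotProduct_eq_zero_of_add_self_eq_one haw hnorm with h | h
  · right; rwa [← hsum, h, zero_add]
  · left; rwa [← hsum, h, add_zero]

lemma apply_eq_zero_of_single_mem_orthC {g : Fin m → ℤ} (hg : g ∈ G) {i : Fin m}
    (hi : Pi.single i 1 ∈ orthC G) : g i = 0 := by
  simpa [single_dotProduct] using mem_orthC_iff.1 hi g hg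

lemma apply_eq_zero_of_mem_orthC_of_single_mem {x : Fin m → ℤ} (hx : x ∈ orthC G) {i : Fin m}
    (hi : Pi.single i 1 ∈ G) : x i = 0 := by
  simpa [dotProduct_single] using mem_orthC_iff.1 hx _ hi

lemma span_single_eq {ι : Type*} {σ : ι → Fin m}
    (hmem : ∀ k, Pi.single (σ k) 1 ∈ H) (hvanish : ∀ x ∈ H, ∀ i ∉ Set.range σ, x i = 0) :
    Submodule.span ℤ (Set.range fun k => Pi.single (σ k) 1) = H := by
  refine le_antisymm (Submodule.span_le.2 (Set.range_subset_iff.2 hmem)) fun x hx => ?_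
  rw [pi_eq_sum_univ' x]
  refine Submodule.sum_mem _ fun i _ => ?_
  by_cases hi : i ∈ Set.range σ
  · obtain ⟨k, rfl⟩ := hi
    exact Submodule.smul_mem _ _ (Submodule.subset_span ⟨k, rfl⟩)
  · rw [hvanish x hx i hi, zero_smul]
    exact Submodule.zero_mem _

lemma exists_basis_single {ι : Type*} [DecidableEq ι] {σ : ι → Fin m} (hσ : Function.Injective σ)
    (hmem : ∀ k, Pi.single (σ k) 1 ∈ H) (hvanish : ∀ x ∈ H, ∀ i ∉ Set.range σ, x i = 0) :
    ∃ b : Module.Basis ι ℤ H, ∀ k l, (b k : Fin m → ℤ) ⬝ᵥ b l = if k = l then 1 else 0 := by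
  have hli : LinearIndependent ℤ fun k => (Pi.single (σ k) 1 : Fin m → ℤ) := by
    simpa [Function.comp_def] using (Pi.basisFun ℤ (Fin m)).linearIndependent.comp σ hσ
  refine ⟨(Module.Basis.span hli).map (LinearEquiv.ofEq _ _ (span_single_eq hmem hvanish)),
    fun k l => ?_⟩
  simp only [Module.Basis.map_apply, LinearEquiv.coe_ofEq_apply, Module.Basis.span_apply,
    dotProduct_single, Pi.single_apply, hσ.eq_iff, mul_one, eq_comm]

lemma exists_basis_single_of_finset (S : Finset (Fin m)) {n : ℕ} (hn : S.card = n)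
    (hmem : ∀ i ∈ S, Pi.single i 1 ∈ H) (hvanish : ∀ x ∈ H, ∀ i ∉ S, x i = 0) :
    ∃ b : Module.Basis (Fin n) ℤ H, ∀ k l, (b k : Fin m → ℤ) ⬝ᵥ b l = if k = l then 1 else 0 := by
  refine exists_basis_single (S.orderEmbOfFin hn).injective
    (fun k => hmem _ (S.orderEmbOfFin_mem hn k)) fun x hx i hi => hvanish x hx i ?_
  rwa [S.range_orderEmbOfFin hn] at hi

end StdLattice

open StdLattice in
/-- A unimodular sublattice of the standard lattice is standard, and so is its
orthogonal complement. -/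
theorem stmt3 (m : ℕ) (G : Submodule ℤ (Fin m → ℤ))
    (huni : Function.Bijective
      (fun g : G => ((dotB m (g : Fin m → ℤ)).domRestrict G : Module.Dual ℤ G))) :
    ∃ n : ℕ, n ≤ m ∧
      (∃ b : Module.Basis (Fin n) ℤ G, ∀ i j,
        (∑ k, (b i : Fin m → ℤ) k * (b j : Fin m → ℤ) k) = if i = j then 1 else 0) ∧
      (∃ c : Module.Basis (Fin (m - n)) ℤ (orthC G), ∀ i j,
        (∑ k, (c i : Fin m → ℤ) k * (c j : Fin m → ℤ) k) = if i = j then 1 else 0) := by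
  classical
  set S := univ.filter fun i => Pi.single i 1 ∈ G
  have hS : ∀ i ∈ S, Pi.single i 1 ∈ G := fun i hi => (mem_filter.1 hi).2
  have hSc : ∀ i ∉ S, Pi.single i 1 ∈ orthC G := fun i hi =>
    (single_mem_or_single_mem_orthC huni.2 i).resolve_left fun h => hi (by simp [S, h])
  obtain ⟨b, hb⟩ := exists_basis_single_of_finset S rfl hS
    fun g hg i hi => apply_eq_zero_of_single_mem_orthC hg (hSc i hi)
  obtain ⟨c, hc⟩ := exists_basis_single_of_finset Sᶜ (n := m - #S) (by simp [card_compl])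
    (fun i hi => hSc i (mem_compl.1 hi))
    fun x hx i hi => apply_eq_zero_of_mem_orthC_of_single_mem hx (hS i (notMem_compl.1 hi))
  exact ⟨#S, by simpa using S.card_le_univ, ⟨b, hb⟩, ⟨c, hc⟩⟩
end

section
/- Let k : ℕ, let S ∈ Matrix (Fin k) (Fin k) ℂ, and let z ∈ ℂ with ‖z‖ = 1; set ω = z². Then det ((1 − ω) • S + (1 − conj ω) • Sᵀ) = (conj z)^k * (1 − ω)^k * det (z • S − conj z • Sᵀ). -/
/-!
On the unit circle `conj z = z⁻¹`, so with `ω = z²` both coefficients of the Tristram–Levine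
form are multiples of `conj z (1 - ω)`: namely `1 - ω = conj z (1 - ω) z` and
`1 - conj ω = -conj z (1 - ω) conj z`. The form is therefore the scalar `conj z (1 - ω)` times
`z S - conj z Sᵀ`, and taking determinants raises that scalar to the `k`-th power.
-/

open Matrix

namespace Matrix

variable {n R : Type*} [CommRing R]

theorem one_sub_sq_smul_add_one_sub_sq_smul_transpose {z w : R} (hzw : z * w = 1)
    (S : Matrix n n R) :
    (1 - z ^ 2) • S + (1 - w ^ 2) • Sᵀ = (w * (1 - z ^ 2)) • (z • S - w • Sᵀ) := by
  have hz : w * (1 - z ^ 2) * z = 1 - z ^ 2 := by linear_combination (1 - z ^ 2) * hzw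
  have hw : w * (1 - z ^ 2) * w = -(1 - w ^ 2) := by linear_combination (-(z * w + 1)) * hzw
  rw [smul_sub, smul_smul, smul_smul, hz, hw, neg_smul, sub_neg_eq_add]

theorem det_one_sub_sq_smul_add_one_sub_sq_smul_transpose [Fintype n] [DecidableEq n]
    {z w : R} (hzw : z * w = 1) (S : Matrix n n R) :
    ((1 - z ^ 2) • S + (1 - w ^ 2) • Sᵀ).det =
      w ^ Fintype.card n * (1 - z ^ 2) ^ Fintype.card n * (z • S - w • Sᵀ).det := by
  rw [one_sub_sq_smul_add_one_sub_sq_smul_transpose hzw, det_smul, mul_pow]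

end Matrix

/-- The determinant identity relating the Tristram–Levine form of a Seifert matrix
to the Alexander-polynomial determinant. -/
theorem stmt4 (k : ℕ) (S : Matrix (Fin k) (Fin k) ℂ) (z : ℂ) (hz : ‖z‖ = 1)
    (ω : ℂ) (hω : ω = z ^ 2) :
    ((1 - ω) • S + (1 - (starRingEnd ℂ) ω) • Sᵀ).det =
      ((starRingEnd ℂ) z) ^ k * (1 - ω) ^ k *
        (z • S - (starRingEnd ℂ) z • Sᵀ).det := by
  subst hω
  have hz_conj : z * (starRingEnd ℂ) z = 1 := by
    rw [Complex.mul_conj, Complex.normSq_eq_norm_sq, hz, one_pow, Complex.ofReal_one]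
  rw [map_pow, det_one_sub_sq_smul_add_one_sub_sq_smul_transpose hz_conj, Fintype.card_fin]
end

section
/- Let k : ℕ and let H ∈ Matrix (Fin (k+2)) (Fin (k+2)) ℂ be Hermitian, and let H' be the k×k principal submatrix of H obtained by deleting the last two rows and columns (H' is also Hermitian). Assume det H ≠ 0 and det H' ≠ 0. Then det H and det H' are real numbers, and: if det H and det H' have opposite signs then sig(H) = sig(H'); if det H and det H' have the same sign then sig(H) = sig(H') + 2 or sig(H) = sig(H') − 2. -/
/-!
Diagonalising by the eigenvector unitary shows that the number of negative eigenvalues of a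
Hermitian matrix `A` is the largest dimension of a subspace on which `x ↦ re (xᴴ A x)` is negative
definite. Compressing `A` to `Bᴴ A B` along an injective `B : 𝕜ᵐ → 𝕜ⁿ` therefore cannot raise this
number, and lowers it by at most `n - m`, because a negative definite subspace meets the range of
`B` in codimension at most `n - m`. For the principal submatrix `H'` the drop `d` is thus `0`, `1`
or `2`. The determinant is the product of the eigenvalues, so `det H · det H'` has the sign of
`(-1) ^ d`; and for a nonsingular matrix the signature is `n - 2 ·` (number of negative
eigenvalues), so `sig H - sig H' = 2 - 2 d`.
-/

open Matrix

/-- The signature of a Hermitian complex matrix: the number of positive eigenvalues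
minus the number of negative eigenvalues (and `0` for non-Hermitian matrices). -/
noncomputable def matSig {n : ℕ} (H : Matrix (Fin n) (Fin n) ℂ) : ℤ := by
  classical
  exact if h : H.IsHermitian then
    ((Finset.univ.filter fun i => 0 < h.eigenvalues i).card : ℤ) -
    ((Finset.univ.filter fun i => h.eigenvalues i < 0).card : ℤ)
  else 0

open Finset Module

theorem Finset.neg_one_pow_card_filter_neg_mul_prod_pos {ι R : Type*} [CommRing R]
    [LinearOrder R] [IsStrictOrderedRing R] (s : Finset ι) (f : ι → R) (hf : ∀ i ∈ s, f i ≠ 0) :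
    0 < (-1) ^ #{i ∈ s | f i < 0} * ∏ i ∈ s, f i := by
  have hsign : ∀ i ∈ s, f i = (if f i < 0 then -1 else 1) * |f i| := fun i _ => by
    split_ifs with h
    · rw [abs_of_neg h]; ring
    · rw [abs_of_nonneg (not_lt.1 h), one_mul]
  rw [prod_congr rfl hsign, prod_mul_distrib, prod_ite, prod_const, prod_const_one, mul_one,
    ← mul_assoc, ← pow_add, ← two_mul, pow_mul, neg_one_sq, one_pow, one_mul]
  exact prod_pos fun i hi => abs_pos.2 (hf i hi)

theorem neg_one_pow_mul_mul_pos {R : Type*} [CommRing R] [PartialOrder R] [IsStrictOrderedRing R]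
    {a b : R} {m d : ℕ} (ha : 0 < (-1) ^ (m + d) * a) (hb : 0 < (-1) ^ m * b) :
    0 < (-1) ^ d * (a * b) :=
  calc 0 < (-1) ^ (m + d) * a * ((-1) ^ m * b) := mul_pos ha hb
    _ = (-1) ^ m * (-1) ^ m * ((-1) ^ d * (a * b)) := by ring
    _ = (-1) ^ d * (a * b) := by rw [← mul_pow, neg_one_mul, neg_neg, one_pow, one_mul]

namespace Matrix

variable {𝕜 : Type*} [RCLike 𝕜] {m n : Type*}

theorem finrank_map_mulVecLin [Fintype m] {B : Matrix n m 𝕜} (hB : Function.Injective B.mulVec)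
    (W : Submodule 𝕜 (m → 𝕜)) : finrank 𝕜 (W.map B.mulVecLin) = finrank 𝕜 W :=
  (Submodule.equivMapOfInjective _ hB W).finrank_eq.symm

-- `(1 : Matrix n n 𝕜).submatrix id e` is the matrix of extension by zero along `e`.
theorem conjTranspose_mul_mul_one_submatrix [Fintype n] [DecidableEq n] (A : Matrix n n 𝕜)
    (e : m → n) :
    ((1 : Matrix n n 𝕜).submatrix id e)ᴴ * A * (1 : Matrix n n 𝕜).submatrix id e =
      A.submatrix e e := by
  ext i j
  simp [mul_apply, one_apply]

variable [Fintype m] [Fintype n]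

def IsNegDefOn (A : Matrix n n 𝕜) (W : Submodule 𝕜 (n → 𝕜)) : Prop :=
  ∀ x ∈ W, x ≠ 0 → RCLike.re (star x ⬝ᵥ (A *ᵥ x)) < 0

theorem star_dotProduct_conjTranspose_mul_mul_mulVec (A : Matrix n n 𝕜) (B : Matrix n m 𝕜)
    (x : m → 𝕜) : star x ⬝ᵥ ((Bᴴ * A * B) *ᵥ x) = star (B *ᵥ x) ⬝ᵥ (A *ᵥ (B *ᵥ x)) := by
  rw [← mulVec_mulVec, ← mulVec_mulVec, dotProduct_mulVec, vecMul_conjTranspose, star_star]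

theorem mulVec_injective_of_mul_eq_one [DecidableEq m] {C : Matrix m n 𝕜} {B : Matrix n m 𝕜}
    (h : C * B = 1) : Function.Injective B.mulVec :=
  Function.LeftInverse.injective (g := C.mulVec) fun x => by
    rw [mulVec_mulVec, h, one_mulVec]

theorem mulVec_one_submatrix_injective [DecidableEq m] [DecidableEq n] {e : m → n}
    (he : Function.Injective e) : Function.Injective ((1 : Matrix n n 𝕜).submatrix id e).mulVec :=
  mulVec_injective_of_mul_eq_one (C := ((1 : Matrix n n 𝕜).submatrix id e)ᴴ) <| by
    simpa [submatrix_one e he] using conjTranspose_mul_mul_one_submatrix (1 : Matrix n n 𝕜) e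

section

variable {A : Matrix n n 𝕜} {B : Matrix n m 𝕜}

theorem IsNegDefOn.map {W : Submodule 𝕜 (m → 𝕜)}
    (hW : (Bᴴ * A * B).IsNegDefOn W) : A.IsNegDefOn (W.map B.mulVecLin) := by
  rintro _ ⟨x, hx, rfl⟩ hx0
  have := hW x hx fun h => hx0 (by simp [h])
  rwa [star_dotProduct_conjTranspose_mul_mul_mulVec] at this

theorem IsNegDefOn.comap {V : Submodule 𝕜 (n → 𝕜)} (hB : Function.Injective B.mulVec)
    (hV : A.IsNegDefOn V) : (Bᴴ * A * B).IsNegDefOn (V.comap B.mulVecLin) := by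
  intro x hx hx0
  rw [star_dotProduct_conjTranspose_mul_mul_mulVec]
  exact hV _ hx fun h => hx0 (hB (by simpa using h))

end

section Diagonal

variable [DecidableEq n]

theorem re_star_dotProduct_diagonal_mulVec (d : n → ℝ) (x : n → 𝕜) :
    RCLike.re (star x ⬝ᵥ (diagonal (RCLike.ofReal ∘ d) *ᵥ x)) = ∑ i, d i * ‖x i‖ ^ 2 := by
  simp only [dotProduct, mulVec_diagonal, Pi.star_apply, Function.comp_apply, map_sum]
  refine Finset.sum_congr rfl fun i _ => ?_
  rw [mul_left_comm, RCLike.star_def, RCLike.conj_mul]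
  norm_cast

theorem isNegDefOn_diagonal_top {d : n → ℝ} (hd : ∀ i, d i < 0) :
    (diagonal (RCLike.ofReal ∘ d) : Matrix n n 𝕜).IsNegDefOn ⊤ := by
  intro x _ hx0
  obtain ⟨i, hi⟩ := Function.ne_iff.1 hx0
  rw [re_star_dotProduct_diagonal_mulVec]
  refine Finset.sum_neg' (fun j _ => ?_) ⟨i, mem_univ i, ?_⟩
  · exact mul_nonpos_of_nonpos_of_nonneg (hd j).le (sq_nonneg _)
  · exact mul_neg_of_neg_of_pos (hd i) (by positivity)

theorem finrank_le_card_of_isNegDefOn_diagonal {d : n → ℝ} {W : Submodule 𝕜 (n → 𝕜)}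
    (hW : (diagonal (RCLike.ofReal ∘ d)).IsNegDefOn W) : finrank 𝕜 W ≤ #{i | d i < 0} := by
  let P : W →ₗ[𝕜] ({i // d i < 0} → 𝕜) := LinearMap.funLeft 𝕜 𝕜 Subtype.val ∘ₗ W.subtype
  have hP : Function.Injective P := by
    refine (injective_iff_map_eq_zero P).2 fun x hx => by_contra fun hx0 => ?_
    have hneg := hW x x.2 (by simpa using hx0)
    rw [re_star_dotProduct_diagonal_mulVec] at hneg
    refine hneg.not_ge (Finset.sum_nonneg fun i _ => ?_)
    by_cases hi : d i < 0
    · simp [show (x : n → 𝕜) i = 0 from congrFun hx ⟨i, hi⟩]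
    · exact mul_nonneg (not_lt.1 hi) (sq_nonneg _)
  calc finrank 𝕜 W ≤ finrank 𝕜 ({i // d i < 0} → 𝕜) := LinearMap.finrank_le_finrank_of_injective hP
    _ = #{i | d i < 0} := by simp [Fintype.card_subtype]

theorem exists_isNegDefOn_diagonal (d : n → ℝ) :
    ∃ W : Submodule 𝕜 (n → 𝕜), (diagonal (RCLike.ofReal ∘ d)).IsNegDefOn W ∧
      finrank 𝕜 W = #{i | d i < 0} := by
  let e : {i // d i < 0} → n := Subtype.val
  have hneg : ((diagonal (RCLike.ofReal ∘ d)).submatrix e e : Matrix _ _ 𝕜).IsNegDefOn ⊤ := by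
    rw [submatrix_diagonal _ e Subtype.val_injective]
    exact isNegDefOn_diagonal_top fun i => i.2
  rw [← conjTranspose_mul_mul_one_submatrix] at hneg
  refine ⟨_, hneg.map, ?_⟩
  rw [finrank_map_mulVecLin (mulVec_one_submatrix_injective Subtype.val_injective), finrank_top]
  simp [Fintype.card_subtype]

end Diagonal

namespace IsHermitian

variable [DecidableEq n] {A : Matrix n n 𝕜} (hA : A.IsHermitian)

noncomputable def negCount : ℕ := #{i | hA.eigenvalues i < 0}

theorem conjTranspose_eigenvectorUnitary_mul_mul :
    (hA.eigenvectorUnitary : Matrix n n 𝕜)ᴴ * A * (hA.eigenvectorUnitary : Matrix n n 𝕜) =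
      diagonal (RCLike.ofReal ∘ hA.eigenvalues) := by
  simpa [Unitary.coe_star, star_eq_conjTranspose] using hA.conjStarAlgAut_star_eigenvectorUnitary

theorem finrank_le_negCount {W : Submodule 𝕜 (n → 𝕜)} (hW : A.IsNegDefOn W) :
    finrank 𝕜 W ≤ hA.negCount := by
  set U : Matrix n n 𝕜 := (hA.eigenvectorUnitary : Matrix n n 𝕜)
  have hUinj : Function.Injective Uᴴ.mulVec :=
    mulVec_injective_of_mul_eq_one (Unitary.coe_mul_star_self hA.eigenvectorUnitary)
  have hA' : A = Uᴴᴴ * diagonal (RCLike.ofReal ∘ hA.eigenvalues) * Uᴴ := by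
    simpa [U, Unitary.coe_star, star_eq_conjTranspose] using hA.spectral_theorem
  rw [hA'] at hW
  rw [← finrank_map_mulVecLin hUinj]
  exact finrank_le_card_of_isNegDefOn_diagonal hW.map

theorem exists_isNegDefOn_finrank_eq_negCount :
    ∃ W : Submodule 𝕜 (n → 𝕜), A.IsNegDefOn W ∧ finrank 𝕜 W = hA.negCount := by
  obtain ⟨W, hW, hfin⟩ := exists_isNegDefOn_diagonal (𝕜 := 𝕜) hA.eigenvalues
  rw [← hA.conjTranspose_eigenvectorUnitary_mul_mul] at hW
  refine ⟨_, hW.map, ?_⟩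
  rw [finrank_map_mulVecLin, hfin, negCount]
  exact mulVec_injective_of_mul_eq_one (Unitary.coe_star_mul_self hA.eigenvectorUnitary)

section Compression

variable [DecidableEq m] {B : Matrix n m 𝕜} {C : Matrix m m 𝕜} (hC : C.IsHermitian)

theorem negCount_le_of_eq_conjTranspose_mul_mul (hCAB : C = Bᴴ * A * B)
    (hB : Function.Injective B.mulVec) : hC.negCount ≤ hA.negCount := by
  obtain ⟨W, hW, hfin⟩ := hC.exists_isNegDefOn_finrank_eq_negCount
  rw [hCAB] at hW
  rw [← hfin, ← finrank_map_mulVecLin hB]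
  exact hA.finrank_le_negCount hW.map

theorem negCount_add_card_le_of_eq_conjTranspose_mul_mul (hCAB : C = Bᴴ * A * B)
    (hB : Function.Injective B.mulVec) :
    hA.negCount + Fintype.card m ≤ hC.negCount + Fintype.card n := by
  obtain ⟨V, hV, hfin⟩ := hA.exists_isNegDefOn_finrank_eq_negCount
  let R := LinearMap.range B.mulVecLin
  have hW : finrank 𝕜 (R ⊓ V : Submodule 𝕜 _) ≤ hC.negCount := by
    rw [← Submodule.map_comap_eq, finrank_map_mulVecLin hB]
    exact hC.finrank_le_negCount (hCAB ▸ hV.comap hB)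
  have hR : finrank 𝕜 R = Fintype.card m := by
    rw [LinearMap.finrank_range_of_inj hB, Module.finrank_fintype_fun_eq_card]
  have hsup : finrank 𝕜 (R ⊔ V : Submodule 𝕜 _) ≤ Fintype.card n :=
    (Submodule.finrank_le _).trans (Module.finrank_fintype_fun_eq_card 𝕜).le
  have := Submodule.finrank_sup_add_finrank_inf_eq R V
  omega

theorem negCount_submatrix_le {e : m → n} (he : Function.Injective e) :
    (hA.submatrix e).negCount ≤ hA.negCount :=
  hA.negCount_le_of_eq_conjTranspose_mul_mul _ (conjTranspose_mul_mul_one_submatrix A e).symm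
    (mulVec_one_submatrix_injective he)

theorem negCount_add_card_le_negCount_submatrix_add_card {e : m → n} (he : Function.Injective e) :
    hA.negCount + Fintype.card m ≤ (hA.submatrix e).negCount + Fintype.card n :=
  hA.negCount_add_card_le_of_eq_conjTranspose_mul_mul _
    (conjTranspose_mul_mul_one_submatrix A e).symm (mulVec_one_submatrix_injective he)

end Compression

theorem re_det_eq_prod_eigenvalues : RCLike.re A.det = ∏ i, hA.eigenvalues i := by
  rw [hA.det_eq_prod_eigenvalues, ← RCLike.ofReal_prod, RCLike.ofReal_re]

theorem im_det_eq_zero (hA : A.IsHermitian) : RCLike.im A.det = 0 := by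
  rw [hA.det_eq_prod_eigenvalues, ← RCLike.ofReal_prod, RCLike.ofReal_im]

theorem eigenvalues_ne_zero_of_det_ne_zero (hdet : A.det ≠ 0) (i : n) : hA.eigenvalues i ≠ 0 := by
  rw [hA.det_eq_prod_eigenvalues, prod_ne_zero_iff] at hdet
  exact_mod_cast hdet i (mem_univ i)

theorem neg_one_pow_negCount_mul_re_det_pos (hdet : A.det ≠ 0) :
    0 < (-1) ^ hA.negCount * RCLike.re A.det := by
  rw [re_det_eq_prod_eigenvalues]
  exact neg_one_pow_card_filter_neg_mul_prod_pos _ _ fun i _ =>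
    hA.eigenvalues_ne_zero_of_det_ne_zero hdet i

end IsHermitian

end Matrix

theorem matSig_eq_of_det_ne_zero {n : ℕ} {A : Matrix (Fin n) (Fin n) ℂ} (hA : A.IsHermitian)
    (hdet : A.det ≠ 0) : matSig A = n - 2 * hA.negCount := by
  have hpos : #{i | 0 < hA.eigenvalues i} = #{i | ¬hA.eigenvalues i < 0} := by
    congr 1
    ext i
    simp only [mem_filter, mem_univ, true_and, not_lt]
    exact ⟨le_of_lt, (lt_of_le_of_ne · (hA.eigenvalues_ne_zero_of_det_ne_zero hdet i).symm)⟩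
  have hcard := card_filter_add_card_filter_not (s := univ) fun i => hA.eigenvalues i < 0
  rw [card_univ, Fintype.card_fin] at hcard
  rw [matSig, dif_pos hA]
  simp only [IsHermitian.negCount] at *
  omega

/-- Comparing the signature of a nonsingular Hermitian matrix with that of its
principal submatrix of corank 2, in terms of the signs of the determinants. -/
theorem stmt10 (k : ℕ) (H : Matrix (Fin (k + 2)) (Fin (k + 2)) ℂ)
    (hH : H.IsHermitian)
    (H' : Matrix (Fin k) (Fin k) ℂ)
    (hsub : H' = H.submatrix (Fin.castLE (by omega)) (Fin.castLE (by omega)))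
    (hdet : H.det ≠ 0) (hdet' : H'.det ≠ 0) :
    H.det.im = 0 ∧ H'.det.im = 0 ∧
    (H.det.re * H'.det.re < 0 → matSig H = matSig H') ∧
    (0 < H.det.re * H'.det.re →
      matSig H = matSig H' + 2 ∨ matSig H = matSig H' - 2) := by
  have he : Function.Injective (Fin.castLE (by omega : k ≤ k + 2)) := Fin.castLE_injective _
  have hH' : H'.IsHermitian := hsub ▸ hH.submatrix _
  have hle : hH'.negCount ≤ hH.negCount := by
    subst hsub; exact hH.negCount_submatrix_le he
  have hge : hH.negCount ≤ hH'.negCount + 2 := by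
    subst hsub
    have := hH.negCount_add_card_le_negCount_submatrix_add_card he
    simp only [Fintype.card_fin] at this
    omega
  obtain ⟨d, hd⟩ := Nat.exists_eq_add_of_le hle
  have hsign : 0 < (-1) ^ d * (H.det.re * H'.det.re) :=
    neg_one_pow_mul_mul_pos (hd ▸ hH.neg_one_pow_negCount_mul_re_det_pos hdet)
      (hH'.neg_one_pow_negCount_mul_re_det_pos hdet')
  have hd2 : d ≤ 2 := by omega
  rw [matSig_eq_of_det_ne_zero hH hdet, matSig_eq_of_det_ne_zero hH' hdet', hd]
  refine ⟨hH.im_det_eq_zero, hH'.im_det_eq_zero, fun h => ?_, fun h => ?_⟩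
  · obtain rfl : d = 1 := by interval_cases d <;> simp at hsign ⊢ <;> linarith
    push_cast; ring
  · obtain rfl | rfl : d = 0 ∨ d = 2 := by interval_cases d <;> simp at hsign ⊢; linarith
    · left; push_cast; ring
    · right; push_cast; ring
end

section
/- Define N, D, g : ℝ → ℝ by N(t) = 4*Real.cos (6*t) − 6*Real.cos (5*t) + 2*Real.cos (4*t) + 4*Real.cos (3*t) − 6*Real.cos (2*t) + 2*Real.cos t + 1, D(t) = 2*Real.cos (6*t) − 2*Real.cos (5*t) + 2*Real.cos (3*t) − 2*Real.cos (2*t) + 1, and g(t) = N(t)/D(t). Then g(π) = 1, deriv g π = 0, and iteratedDeriv 2 g π < 0. -/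
/-- The numerator `N(t)` of the ratio `g(t) = Δ_{K₁}(e^{it/2})/Δ_{K₀}(e^{it/2})`. -/
noncomputable def Nfun (t : ℝ) : ℝ :=
  4 * Real.cos (6 * t) - 6 * Real.cos (5 * t) + 2 * Real.cos (4 * t)
    + 4 * Real.cos (3 * t) - 6 * Real.cos (2 * t) + 2 * Real.cos t + 1

/-- The denominator `D(t)`. -/
noncomputable def Dfun (t : ℝ) : ℝ :=
  2 * Real.cos (6 * t) - 2 * Real.cos (5 * t) + 2 * Real.cos (3 * t)
    - 2 * Real.cos (2 * t) + 1

/-- The ratio `g(t) = N(t)/D(t)`. -/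
noncomputable def gfun (t : ℝ) : ℝ := Nfun t / Dfun t

/-!
Both `N` and `D` are cosine polynomials `∑ aₖ cos (k t)`. At `t = π` every `sin (k π)` vanishes
and `cos (k π) = (-1)^k`, so `π` is a critical point of `N` and of `D`, hence of `g`, and there
`g″(π) = (N″(π) D(π) - N(π) D″(π)) / D(π)² = (-264 + 96) / 1 = -168`.
-/

open Real Filter Topology

section QuotientAtCriticalPoint

variable {f g f' g' : ℝ → ℝ} {x : ℝ}

theorem deriv_div_eq_zero_of_hasDerivAt_zero (hf : HasDerivAt f 0 x) (hg : HasDerivAt g 0 x)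
    (hgx : g x ≠ 0) : deriv (fun t => f t / g t) x = 0 := by
  simp [(hf.fun_div hg hgx).deriv]

theorem iteratedDeriv_two_div_of_hasDerivAt_zero {f'' g'' : ℝ}
    (hf : ∀ t, HasDerivAt f (f' t) t) (hg : ∀ t, HasDerivAt g (g' t) t)
    (hf' : HasDerivAt f' f'' x) (hg' : HasDerivAt g' g'' x)
    (hf'x : f' x = 0) (hg'x : g' x = 0) (hgx : g x ≠ 0) :
    iteratedDeriv 2 (fun t => f t / g t) x = (f'' * g x - f x * g'') / g x ^ 2 := by
  have hg_ne : ∀ᶠ t in 𝓝 x, g t ≠ 0 := (hg x).continuousAt.eventually_ne hgx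
  have hderiv : deriv (fun t => f t / g t) =ᶠ[𝓝 x]
      fun t => (f' t * g t - f t * g' t) / g t ^ 2 :=
    hg_ne.mono fun t ht => ((hf t).div (hg t) ht).deriv
  have hquot := ((hf'.fun_mul (hg x)).fun_sub ((hf x).fun_mul hg')).fun_div
    ((hg x).fun_pow 2) (pow_ne_zero 2 hgx)
  rw [iteratedDeriv_succ, iteratedDeriv_one, hderiv.deriv_eq, hquot.deriv, hf'x, hg'x]
  norm_num
  field_simp

end QuotientAtCriticalPoint

section CosinePolynomial

variable {n : ℕ}

noncomputable def cosPoly (a : Fin n → ℝ) (t : ℝ) : ℝ := ∑ k, a k * cos (k * t)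

noncomputable def sinPoly (a : Fin n → ℝ) (t : ℝ) : ℝ := ∑ k, a k * sin (k * t)

theorem hasDerivAt_cosPoly (a : Fin n → ℝ) (t : ℝ) :
    HasDerivAt (cosPoly a) (-sinPoly (fun k => k * a k) t) t := by
  unfold cosPoly sinPoly
  rw [← Finset.sum_neg_distrib]
  exact HasDerivAt.fun_sum fun k _ =>
    ((((hasDerivAt_id' t).const_mul (k : ℝ)).cos).const_mul (a k)).congr_deriv (by ring)

theorem hasDerivAt_sinPoly (a : Fin n → ℝ) (t : ℝ) :
    HasDerivAt (sinPoly a) (cosPoly (fun k => k * a k) t) t :=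
  HasDerivAt.fun_sum fun k _ =>
    ((((hasDerivAt_id' t).const_mul (k : ℝ)).sin).const_mul (a k)).congr_deriv (by ring)

theorem cosPoly_pi (a : Fin n → ℝ) : cosPoly a π = ∑ k : Fin n, (-1) ^ (k : ℕ) * a k :=
  Finset.sum_congr rfl fun k _ => by
    rw [show ((k : ℕ) : ℝ) * π = ((k : ℕ) : ℤ) * π by norm_cast, cos_int_mul_pi, mul_comm]
    norm_cast

theorem sinPoly_pi (a : Fin n → ℝ) : sinPoly a π = 0 :=
  Finset.sum_eq_zero fun k _ => by simp [sin_nat_mul_pi]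

theorem hasDerivAt_cosPoly_pi (a : Fin n → ℝ) : HasDerivAt (cosPoly a) 0 π := by
  simpa [sinPoly_pi] using hasDerivAt_cosPoly a π

end CosinePolynomial

theorem Nfun_eq_cosPoly : Nfun = cosPoly ![1, 2, -6, 4, 2, -6, 4] := by
  ext t
  norm_num [Nfun, cosPoly, Fin.sum_univ_succ]
  ring

theorem Dfun_eq_cosPoly : Dfun = cosPoly ![1, 0, -2, 2, 0, -2, 2] := by
  ext t
  norm_num [Dfun, cosPoly, Fin.sum_univ_succ]
  ring

/-- The computational claims `g(π) = 1`, `g′(π) = 0`, `g″(π) < 0` from the proof of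
Lemma 5.4. -/
theorem stmt13 :
    gfun Real.pi = 1 ∧ deriv gfun Real.pi = 0 ∧
      iteratedDeriv 2 gfun Real.pi < 0 := by
  unfold gfun
  rw [Nfun_eq_cosPoly, Dfun_eq_cosPoly]
  have hNπ : cosPoly ![1, 2, -6, 4, 2, -6, 4] π = 1 := by
    norm_num [cosPoly_pi, Fin.sum_univ_succ]
  have hDπ : cosPoly ![1, 0, -2, 2, 0, -2, 2] π = 1 := by
    norm_num [cosPoly_pi, Fin.sum_univ_succ]
  have hDπ_ne : cosPoly ![1, 0, -2, 2, 0, -2, 2] π ≠ 0 := by rw [hDπ]; exact one_ne_zero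
  refine ⟨by rw [hNπ, hDπ, div_one], ?_, ?_⟩
  · exact deriv_div_eq_zero_of_hasDerivAt_zero (hasDerivAt_cosPoly_pi _)
      (hasDerivAt_cosPoly_pi _) hDπ_ne
  · rw [iteratedDeriv_two_div_of_hasDerivAt_zero (hasDerivAt_cosPoly _) (hasDerivAt_cosPoly _)
      (hasDerivAt_sinPoly _ π).neg (hasDerivAt_sinPoly _ π).neg
      (by rw [sinPoly_pi, neg_zero]) (by rw [sinPoly_pi, neg_zero]) hDπ_ne, hNπ, hDπ]
    norm_num [cosPoly_pi, Fin.sum_univ_succ]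
end

section
/- Define N, D, g : ℝ → ℝ by N(t) = 4*Real.cos (6*t) − 6*Real.cos (5*t) + 2*Real.cos (4*t) + 4*Real.cos (3*t) − 6*Real.cos (2*t) + 2*Real.cos t + 1, D(t) = 2*Real.cos (6*t) − 2*Real.cos (5*t) + 2*Real.cos (3*t) − 2*Real.cos (2*t) + 1, and g(t) = N(t)/D(t). Then there exists ε > 0 such that D(t) ≠ 0 for all t ∈ Set.Icc (π − ε) π, g is continuous on Set.Icc (π − ε) π, and g is strictly monotonically increasing on Set.Icc (π − ε) π. -/
/-!
Write `g' = H / D²` with `H = N'D - ND'`. At `π` every `sin (kπ)` vanishes and `cos (kπ) = ±1`,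
so `N(π) = D(π) = 1` and `N'(π) = D'(π) = 0`; hence `H(π) = 0` and `H'(π) = N''(π) - D''(π) = -168`
(this is `g''(π) < 0`). So `H > 0` just to the left of `π`, while `D` stays near `1`, and `g`
increases there.
-/

open Real Set Filter Topology

lemma cos_ofNat_mul_pi (n : ℕ) [n.AtLeastTwo] : cos ((ofNat(n) : ℝ) * π) = (-1) ^ n := by
  exact_mod_cast cos_nat_mul_pi n

lemma sin_ofNat_mul_pi (n : ℕ) [n.AtLeastTwo] : sin ((ofNat(n) : ℝ) * π) = 0 := by
  exact_mod_cast sin_nat_mul_pi n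

lemma strictMonoOn_div_of_wronskian_pos {f g f' g' : ℝ → ℝ} {s : Set ℝ} (hs : Convex ℝ s)
    (hf : ∀ x ∈ s, HasDerivAt f (f' x) x) (hg : ∀ x ∈ s, HasDerivAt g (g' x) x)
    (hg₀ : ∀ x ∈ s, g x ≠ 0) (hw : ∀ x ∈ interior s, 0 < f' x * g x - f x * g' x) :
    StrictMonoOn (fun x => f x / g x) s := by
  have hdiv (x) (hx : x ∈ s) := (hf x hx).fun_div (hg x hx) (hg₀ x hx)
  refine strictMonoOn_of_deriv_pos hs (fun x hx => (hdiv x hx).continuousAt.continuousWithinAt)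
    fun x hx => ?_
  have hg₀x := hg₀ x (interior_subset hx)
  rw [(hdiv x (interior_subset hx)).deriv]
  exact div_pos (hw x hx) (by positivity)

lemma HasDerivAt.eventually_pos_left_of_neg {f : ℝ → ℝ} {f' x₀ : ℝ} (hf : HasDerivAt f f' x₀)
    (hf' : f' < 0) (hf₀ : f x₀ = 0) : ∀ᶠ x in 𝓝 x₀, x < x₀ → 0 < f x := by
  filter_upwards [eventually_nhdsWithin_sign_eq_of_deriv_neg (hf.deriv ▸ hf') hf₀] with x hx hlt
  rwa [← sign_eq_one_iff, hx, sign_eq_one_iff, sub_pos]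

noncomputable def Nder (t : ℝ) : ℝ :=
  -24 * sin (6 * t) + 30 * sin (5 * t) - 8 * sin (4 * t)
    - 12 * sin (3 * t) + 12 * sin (2 * t) - 2 * sin t

noncomputable def Dder (t : ℝ) : ℝ :=
  -12 * sin (6 * t) + 10 * sin (5 * t) - 6 * sin (3 * t) + 4 * sin (2 * t)

section Derivatives

variable (t : ℝ)

lemma hasDerivAt_Nfun : HasDerivAt Nfun (Nder t) t := by
  have hc (a : ℝ) := (hasDerivAt_const_mul (x := t) a).cos
  refine (((((((hc 6).const_mul 4).sub ((hc 5).const_mul 6)).add ((hc 4).const_mul 2)).add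
    ((hc 3).const_mul 4)).sub ((hc 2).const_mul 6)).add ((hasDerivAt_cos t).const_mul 2)).add_const
    1 |>.congr_deriv ?_
  rw [Nder]
  ring

lemma hasDerivAt_Dfun : HasDerivAt Dfun (Dder t) t := by
  have hc (a : ℝ) := (hasDerivAt_const_mul (x := t) a).cos
  refine (((((hc 6).const_mul 2).sub ((hc 5).const_mul 2)).add ((hc 3).const_mul 2)).sub
    ((hc 2).const_mul 2)).add_const 1 |>.congr_deriv ?_
  rw [Dder]
  ring

lemma hasDerivAt_Nder : HasDerivAt Nder (-144 * cos (6 * t) + 150 * cos (5 * t)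
    - 32 * cos (4 * t) - 36 * cos (3 * t) + 24 * cos (2 * t) - 2 * cos t) t := by
  have hs (a : ℝ) := (hasDerivAt_const_mul (x := t) a).sin
  refine ((((((hs 6).const_mul (-24)).add ((hs 5).const_mul 30)).sub ((hs 4).const_mul 8)).sub
    ((hs 3).const_mul 12)).add ((hs 2).const_mul 12)).sub ((hasDerivAt_sin t).const_mul 2)
    |>.congr_deriv ?_
  ring

lemma hasDerivAt_Dder : HasDerivAt Dder
    (-72 * cos (6 * t) + 50 * cos (5 * t) - 18 * cos (3 * t) + 8 * cos (2 * t)) t := by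
  have hs (a : ℝ) := (hasDerivAt_const_mul (x := t) a).sin
  refine ((((hs 6).const_mul (-12)).add ((hs 5).const_mul 10)).sub ((hs 3).const_mul 6)).add
    ((hs 2).const_mul 4) |>.congr_deriv ?_
  ring

end Derivatives

lemma Nfun_pi : Nfun π = 1 := by
  norm_num [Nfun, cos_ofNat_mul_pi]

lemma Dfun_pi : Dfun π = 1 := by
  norm_num [Dfun, cos_ofNat_mul_pi]

lemma Nder_pi : Nder π = 0 := by
  simp [Nder, sin_ofNat_mul_pi]

lemma Dder_pi : Dder π = 0 := by
  simp [Dder, sin_ofNat_mul_pi]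

lemma hasDerivAt_wronskian_pi :
    HasDerivAt (fun t => Nder t * Dfun t - Nfun t * Dder t) (-168) π := by
  refine ((hasDerivAt_Nder π).fun_mul (hasDerivAt_Dfun π)).fun_sub
    ((hasDerivAt_Nfun π).fun_mul (hasDerivAt_Dder π)) |>.congr_deriv ?_
  norm_num [Nfun_pi, Dfun_pi, Nder_pi, Dder_pi, cos_ofNat_mul_pi]

/-- On some interval `[π - ε, π]` the denominator `D` is nonvanishing and `g` is
continuous and strictly increasing. -/
theorem stmt14 :
    ∃ ε : ℝ, 0 < ε ∧
      (∀ t ∈ Set.Icc (Real.pi - ε) Real.pi, Dfun t ≠ 0) ∧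
      ContinuousOn gfun (Set.Icc (Real.pi - ε) Real.pi) ∧
      StrictMonoOn gfun (Set.Icc (Real.pi - ε) Real.pi) := by
  have hD : ∀ᶠ t in 𝓝 π, Dfun t ≠ 0 :=
    (hasDerivAt_Dfun π).continuousAt.eventually_ne (by rw [Dfun_pi]; exact one_ne_zero)
  have hW : ∀ᶠ t in 𝓝 π, t < π → 0 < Nder t * Dfun t - Nfun t * Dder t :=
    hasDerivAt_wronskian_pi.eventually_pos_left_of_neg (by norm_num) (by simp [Nder_pi, Dder_pi])
  obtain ⟨l, hlπ, hl⟩ := mem_nhdsLE_iff_exists_Icc_subset.mp (nhdsWithin_le_nhds (hD.and hW))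
  have hD₀ (t) (ht : t ∈ Icc l π) : Dfun t ≠ 0 := (hl ht).1
  refine ⟨π - l, sub_pos.mpr hlπ, ?_⟩
  rw [sub_sub_cancel]
  refine ⟨hD₀, fun t ht => ?_, ?_⟩
  · exact ((hasDerivAt_Nfun t).continuousAt.div (hasDerivAt_Dfun t).continuousAt
      (hD₀ t ht)).continuousWithinAt
  · refine strictMonoOn_div_of_wronskian_pos (convex_Icc l π) (fun t _ => hasDerivAt_Nfun t)
      (fun t _ => hasDerivAt_Dfun t) hD₀ fun t ht => ?_
    rw [interior_Icc] at ht
    exact (hl (Ioo_subset_Icc_self ht)).2 ht.2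
end

section
/- Let A be an additive commutative group, let φ : ℕ → (A →+ ℤ) be a family of group homomorphisms, let K : ℕ → A, let σ₀ : ℕ → ℤ, and let ε : ℕ → ℕ → ℤ with ε l m = 1 ∨ ε l m = −1 for all l, m. Assume that for all l, m : ℕ: if m < l then φ l (K m) = σ₀ l, and if m ≥ l then φ l (K m) = σ₀ l + 2 * ε l m. If the set {l : ℕ | σ₀ l ≠ 0} is infinite, then the family K is linearly independent over ℤ: for every finitely supported function α : ℕ →₀ ℤ with ∑ m in α.support, α m • K m = 0, one has α = 0. -/
/-!
Apply `φ l` to a vanishing combination `∑ α m • K m`. For `l` beyond the support of `α` every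
`K m` has the same value `σ₀ l`, so choosing `σ₀ l ≠ 0` forces `∑ α m = 0`. Subtracting `σ₀ n`
times this from the relation at the top index `n` of the support leaves only `2 ε n n · α n = 0`.
-/

open Finsupp

section

variable {ι R M : Type*} [Ring R] [NoZeroDivisors R] [AddCommGroup M] [Module R M]
  {v : ι → M} {α : ι →₀ R}

theorem Finsupp.sum_coeff_eq_zero_of_apply_eq_const (hα : linearCombination R v α = 0)
    (f : M →ₗ[R] R) {c : R} (hc : c ≠ 0) (hf : ∀ i ∈ α.support, f (v i) = c) :
    α.sum (fun _ a => a) = 0 := by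
  have h := congrArg f hα
  rw [map_zero, apply_linearCombination, linearCombination_apply] at h
  have hsum : α.sum (fun _ a => a) * c = 0 := by
    rw [← h, Finsupp.sum, Finsupp.sum, Finset.sum_mul]
    exact Finset.sum_congr rfl fun i hi => by simp [hf i hi]
  exact (mul_eq_zero.mp hsum).resolve_right hc

theorem Finsupp.coeff_eq_zero_of_apply_ne_const (hα : linearCombination R v α = 0)
    (hsum : α.sum (fun _ a => a) = 0) (f : M →ₗ[R] R) (c : R) {j : ι}
    (hf : ∀ i ∈ α.support, i ≠ j → f (v i) = c) (hj : f (v j) ≠ c) :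
    α j = 0 := by
  have h := congrArg f hα
  rw [map_zero, apply_linearCombination, linearCombination_apply] at h
  have hshift : α.sum (fun i a => a * (f (v i) - c)) = 0 := by
    rw [Finsupp.sum] at hsum
    simp only [mul_sub, Finsupp.sum, Finset.sum_sub_distrib, ← Finset.sum_mul, hsum, zero_mul,
      sub_zero]
    simpa [Finsupp.sum] using h
  rw [Finsupp.sum, Finset.sum_eq_single j
    (fun i hi hij => by rw [hf i hi hij, sub_self, mul_zero])
    (fun hj => by rw [Finsupp.notMem_support_iff.mp hj, zero_mul])] at hshift
  exact (mul_eq_zero.mp hshift).resolve_right (sub_ne_zero.mpr hj)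

theorem linearIndependent_of_apply_eq_of_lt (φ : ℕ → M →ₗ[R] R) {K : ℕ → M} (σ₀ : ℕ → R)
    (h_lt : ∀ l m, m < l → φ l (K m) = σ₀ l) (h_diag : ∀ n, φ n (K n) ≠ σ₀ n)
    (hinf : {l | σ₀ l ≠ 0}.Infinite) :
    LinearIndependent R K := by
  rw [linearIndependent_iff]
  intro α hα
  by_contra hne
  have hsupp : α.support.Nonempty := Finsupp.support_nonempty_iff.mpr hne
  set n := α.support.max' hsupp
  have hle : ∀ m ∈ α.support, m ≤ n := fun m hm => α.support.le_max' m hm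
  obtain ⟨l, hl, hnl⟩ := hinf.exists_gt n
  have hsum := sum_coeff_eq_zero_of_apply_eq_const hα (φ l) hl
    fun m hm => h_lt l m ((hle m hm).trans_lt hnl)
  have hn := coeff_eq_zero_of_apply_ne_const hα hsum (φ n) (σ₀ n)
    (fun m hm hmn => h_lt n m (lt_of_le_of_ne (hle m hm) hmn)) (h_diag n)
  exact Finsupp.mem_support_iff.mp (α.support.max'_mem hsupp) hn

end

/-- The abstract linear-independence argument behind Theorem 1.4: a family of
elements detected by signature-like homomorphisms as stated is linearly
independent over `ℤ`. -/
theorem stmt18 {A : Type*} [AddCommGroup A] (φ : ℕ → A →+ ℤ) (K : ℕ → A)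
    (σ₀ : ℕ → ℤ) (ε : ℕ → ℕ → ℤ)
    (hε : ∀ l m : ℕ, ε l m = 1 ∨ ε l m = -1)
    (h1 : ∀ l m : ℕ, m < l → φ l (K m) = σ₀ l)
    (h2 : ∀ l m : ℕ, l ≤ m → φ l (K m) = σ₀ l + 2 * ε l m)
    (hinf : {l : ℕ | σ₀ l ≠ 0}.Infinite) :
    ∀ α : ℕ →₀ ℤ, (∑ m ∈ α.support, α m • K m) = 0 → α = 0 := by
  have h_diag : ∀ n, φ n (K n) ≠ σ₀ n := fun n => by
    rw [h2 n n le_rfl]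
    rcases hε n n with h | h <;> simp [h]
  have hK : LinearIndependent ℤ K :=
    linearIndependent_of_apply_eq_of_lt (fun l => (φ l).toIntLinearMap) σ₀ h1 h_diag hinf
  exact fun α hα => linearIndependent_iff.mp hK α hα
end
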